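/- Given observations y_{i,j} ∈ R^p for classes i = 1,...,c, the minimizers of F(μ_1,...,μ_c, Σ_w) = Σ_{i,j} (1/n)(y_{i,j}-μ_i)^T Σ_w^{-1}(y_{i,j}-μ_i) + ln|Σ_w| + Tr(α Ω Σ_w^{-1}) over μ_i ∈ R^p and Σ_w positive definite are μ̂_i = ȳ_i (the class sample means) and Σ̂_w = S_yy + α Ω, where S_yy = (1/n) Σ_{i,j} (y_{i,j}-ȳ_i)(y_{i,j}-ȳ_i)^T. Hence the penalized discriminant analysis criterion arg max_β β^T Σ̂_b β / (β^T(S_yy + αΩ)β) arises as the MAP estimate under the inverse-Wishart-type prior exp(-\tfrac12 Tr(αΩ Σ_w^{-1}))-penalty. -/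

import Mathlib

/-!
For fixed `Σ_w`, each class term `∑ⱼ (y_{ij} - μᵢ)ᵀ Σ_w⁻¹ (y_{ij} - μᵢ)` is minimised at the class
mean (parallel-axis identity), and there the data term equals `Tr(Σ_w⁻¹ S_yy)`, so the criterion
becomes `Tr(Σ_w⁻¹ Σ) + ln |Σ_w|` with `Σ = S_yy + αΩ`. Writing `C = Σ^{1/2} Σ_w⁻¹ Σ^{1/2}`, this
exceeds its value `p + ln |Σ|` at `Σ_w = Σ` by `Tr C - p - ln |C| = ∑ (λ - 1 - ln λ) ≥ 0`, the sum
running over the (positive) eigenvalues `λ` of `C`.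
-/

open Matrix

theorem sum_sub_inv_card_smul_sum {ι K E : Type*} [Fintype ι] [DivisionRing K] [CharZero K]
    [AddCommGroup E] [Module K E] (v : ι → E) :
    ∑ i, (v i - (Fintype.card ι : K)⁻¹ • ∑ j, v j) = 0 := by
  rcases isEmpty_or_nonempty ι with hι | hι
  · simp
  · rw [Finset.sum_sub_distrib, Finset.sum_const, Finset.card_univ, ← Nat.cast_smul_eq_nsmul K,
      smul_smul, mul_inv_cancel₀ (Nat.cast_ne_zero.mpr Fintype.card_ne_zero), one_smul, sub_self]

namespace Matrix

variable {n : Type*} [Fintype n]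

theorem trace_mul_vecMulVec {R : Type*} [CommSemiring R] (M : Matrix n n R) (u v : n → R) :
    (M * vecMulVec u v).trace = v ⬝ᵥ (M *ᵥ u) := by
  rw [mul_vecMulVec, trace_vecMulVec, dotProduct_comm]

theorem sum_dotProduct_mulVec_sub_eq {ι R : Type*} [Fintype ι] [CommRing R]
    (M : Matrix n n R) (v : ι → n → R) {b : n → R} (hb : ∑ j, (v j - b) = 0) (μ : n → R) :
    ∑ j, (v j - μ) ⬝ᵥ (M *ᵥ (v j - μ)) =
      ∑ j, (v j - b) ⬝ᵥ (M *ᵥ (v j - b)) + Fintype.card ι * ((b - μ) ⬝ᵥ (M *ᵥ (b - μ))) := by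
  have hsplit : ∀ j, (v j - μ) ⬝ᵥ (M *ᵥ (v j - μ)) =
      (v j - b) ⬝ᵥ (M *ᵥ (v j - b)) + (v j - b) ⬝ᵥ (M *ᵥ (b - μ))
        + ((b - μ) ᵥ* M) ⬝ᵥ (v j - b) + (b - μ) ⬝ᵥ (M *ᵥ (b - μ)) := fun j => by
    rw [show v j - μ = (v j - b) + (b - μ) by abel, mulVec_add, add_dotProduct, dotProduct_add,
      dotProduct_add, ← dotProduct_mulVec]
    ring
  simp only [hsplit, Finset.sum_add_distrib, Finset.sum_const, Finset.card_univ, nsmul_eq_mul]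
  rw [← sum_dotProduct, ← dotProduct_sum, hb, zero_dotProduct, dotProduct_zero, add_zero,
    add_zero]

theorem PosSemidef.sum_dotProduct_mulVec_sub_le {ι : Type*} [Fintype ι] {M : Matrix n n ℝ}
    (hM : M.PosSemidef) (v : ι → n → ℝ) {b : n → ℝ} (hb : ∑ j, (v j - b) = 0) (μ : n → ℝ) :
    ∑ j, (v j - b) ⬝ᵥ (M *ᵥ (v j - b)) ≤ ∑ j, (v j - μ) ⬝ᵥ (M *ᵥ (v j - μ)) := by
  rw [sum_dotProduct_mulVec_sub_eq M v hb μ, le_add_iff_nonneg_right]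
  exact mul_nonneg (Nat.cast_nonneg _) (by simpa using hM.dotProduct_mulVec_nonneg (b - μ))

variable [DecidableEq n]

theorem PosDef.card_add_log_det_le_trace {C : Matrix n n ℝ} (hC : C.PosDef) :
    (Fintype.card n : ℝ) + Real.log C.det ≤ C.trace := by
  have hdet : C.det = ∏ i, hC.1.eigenvalues i := by simpa using hC.1.det_eq_prod_eigenvalues
  have htrace : C.trace = ∑ i, hC.1.eigenvalues i := by simpa using hC.1.trace_eq_sum_eigenvalues
  rw [hdet, htrace, Real.log_prod fun i _ => (hC.eigenvalues_pos i).ne']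
  calc (Fintype.card n : ℝ) + ∑ i, Real.log (hC.1.eigenvalues i)
      = ∑ i, (1 + Real.log (hC.1.eigenvalues i)) := by simp [Finset.sum_add_distrib]
    _ ≤ ∑ i, hC.1.eigenvalues i := Finset.sum_le_sum fun i _ => by
      linarith [Real.log_le_sub_one_of_pos (hC.eigenvalues_pos i)]

open scoped MatrixOrder in
theorem PosDef.card_add_log_det_le_trace_inv_mul_add_log_det {A S : Matrix n n ℝ}
    (hA : A.PosDef) (hS : S.PosDef) :
    (Fintype.card n : ℝ) + Real.log A.det ≤ (S⁻¹ * A).trace + Real.log S.det := by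
  set R := CFC.sqrt A
  have hRH : Rᴴ = R := (CFC.sqrt_nonneg A).posSemidef.1
  have hRR : R * R = A := CFC.sqrt_mul_sqrt_self A hA.posSemidef.nonneg
  have hRunit : IsUnit R := CFC.isUnit_sqrt_iff_isStrictlyPositive.mpr hA.isStrictlyPositive
  -- `S⁻¹ A` is similar to the positive definite matrix `R S⁻¹ R`, where `R = √A`.
  have hC : (R * S⁻¹ * R).PosDef := by
    have := hS.inv.conjTranspose_mul_mul_same (mulVec_injective_iff_isUnit.mpr hRunit)
    rwa [hRH] at this
  have htrace : (R * S⁻¹ * R).trace = (S⁻¹ * A).trace := by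
    rw [Matrix.mul_assoc, trace_mul_comm, Matrix.mul_assoc, hRR]
  have hdet : (R * S⁻¹ * R).det = A.det / S.det := by
    rw [det_mul, det_mul, mul_right_comm, ← det_mul, hRR, det_nonsing_inv,
      Ring.inverse_eq_inv', div_eq_mul_inv]
  have := hC.card_add_log_det_le_trace
  rw [htrace, hdet, Real.log_div hA.det_pos.ne' hS.det_pos.ne'] at this
  linarith

end Matrix

theorem pda_map_minimizers_general {p c : ℕ}
    (ni : Fin c → ℕ)
    (y : (i : Fin c) → Fin (ni i) → (Fin p → ℝ))
    (α : ℝ)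
    (Ω : Matrix (Fin p) (Fin p) ℝ)
    (ybar : Fin c → Fin p → ℝ)
    (hybar : ∀ i, ybar i = ((ni i : ℝ))⁻¹ • ∑ j, y i j)
    (Syy : Matrix (Fin p) (Fin p) ℝ)
    (hSyy : Syy = (((∑ i, ni i : ℕ) : ℝ))⁻¹ •
      ∑ i, ∑ j, Matrix.vecMulVec (y i j - ybar i) (y i j - ybar i))
    (hpd : (Syy + α • Ω).PosDef)
    (F : (Fin c → Fin p → ℝ) → Matrix (Fin p) (Fin p) ℝ → ℝ)
    (hF : ∀ μ Sw, F μ Sw =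
      (∑ i, ∑ j, (((∑ i, ni i : ℕ) : ℝ))⁻¹ *
          ((y i j - μ i) ⬝ᵥ (Sw⁻¹ *ᵥ (y i j - μ i))))
        + Real.log Sw.det + ((α • Ω) * Sw⁻¹).trace) :
    ∀ μ (Sw : Matrix (Fin p) (Fin p) ℝ), Sw.PosDef →
      F ybar (Syy + α • Ω) ≤ F μ Sw := by
  intro μ Sw hSw
  have hcentred : ∀ i, ∑ j, (y i j - ybar i) = 0 := fun i => by
    simpa [hybar] using sum_sub_inv_card_smul_sum (K := ℝ) (y i)
  have hmean : F ybar Sw ≤ F μ Sw := by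
    rw [hF, hF]
    gcongr ?_ + _ + _
    refine Finset.sum_le_sum fun i _ => ?_
    rw [← Finset.mul_sum, ← Finset.mul_sum]
    gcongr _ * ?_
    exact hSw.inv.posSemidef.sum_dotProduct_mulVec_sub_le (y i) (hcentred i) (μ i)
  have hvalue : ∀ M, F ybar M = (M⁻¹ * (Syy + α • Ω)).trace + Real.log M.det := fun M => by
    have hdata : (M⁻¹ * Syy).trace = ∑ i, ∑ j, (((∑ i, ni i : ℕ) : ℝ))⁻¹ *
        ((y i j - ybar i) ⬝ᵥ (M⁻¹ *ᵥ (y i j - ybar i))) := by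
      simp only [hSyy, mul_smul_comm, trace_smul, smul_eq_mul, trace_sum,
        trace_mul_vecMulVec, Finset.mul_sum]
    rw [hF, ← hdata, trace_mul_comm (α • Ω), Matrix.mul_add, trace_add]
    ring
  calc F ybar (Syy + α • Ω) = p + Real.log (Syy + α • Ω).det := by
        rw [hvalue, nonsing_inv_mul _ hpd.det_pos.ne'.isUnit, trace_one, Fintype.card_fin]
    _ ≤ (Sw⁻¹ * (Syy + α • Ω)).trace + Real.log Sw.det := by
        simpa using hpd.card_add_log_det_le_trace_inv_mul_add_log_det hSw
    _ = F ybar Sw := (hvalue Sw).symm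
    _ ≤ F μ Sw := hmean

/-- Penalized discriminant analysis as a MAP estimate: the class sample means
and `S_yy + αΩ` minimize the penalized negative log-posterior criterion. -/
theorem pda_map_minimizers {p c : ℕ}
    (ni : Fin c → ℕ) (hni : ∀ i, 0 < ni i)
    (y : (i : Fin c) → Fin (ni i) → (Fin p → ℝ))
    (α : ℝ) (hα : 0 < α)
    (Ω : Matrix (Fin p) (Fin p) ℝ) (hΩsymm : Ω.IsSymm) (hΩ : Ω.PosSemidef)
    (ybar : Fin c → Fin p → ℝ)
    (hybar : ∀ i, ybar i = ((ni i : ℝ))⁻¹ • ∑ j, y i j)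
    (Syy : Matrix (Fin p) (Fin p) ℝ)
    (hSyy : Syy = (((∑ i, ni i : ℕ) : ℝ))⁻¹ •
      ∑ i, ∑ j, Matrix.vecMulVec (y i j - ybar i) (y i j - ybar i))
    (hpd : (Syy + α • Ω).PosDef)
    (F : (Fin c → Fin p → ℝ) → Matrix (Fin p) (Fin p) ℝ → ℝ)
    (hF : ∀ μ Sw, F μ Sw =
      (∑ i, ∑ j, (((∑ i, ni i : ℕ) : ℝ))⁻¹ *
          ((y i j - μ i) ⬝ᵥ (Sw⁻¹ *ᵥ (y i j - μ i))))
        + Real.log Sw.det + ((α • Ω) * Sw⁻¹).trace) :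
    ∀ μ (Sw : Matrix (Fin p) (Fin p) ℝ), Sw.PosDef →
      F ybar (Syy + α • Ω) ≤ F μ Sw :=
  pda_map_minimizers_general ni y α Ω ybar hybar Syy hSyy hpd F hF
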